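/- arXiv:1904.03558 — 2 statements merged into one kernel-verified Lean document; each statement's English description precedes it below -/
import Mathlib

section
/- Let G be an acyclic digraph on a finite vertex set V and let H be a transitive orientation of the complement of G. Then H ∩ (complement of tcl(G)) is a transitive orientation of the complement of tcl(G). -/
/-- Undirected closure of a digraph: `E ∪ E⁻¹`. -/
def ucl {V : Type*} (E : V → V → Prop) : V → V → Prop := fun a b => E a b ∨ E b a

/-- Complement of a digraph: all pairs of distinct vertices not in `ucl E`. -/
def cmpl {V : Type*} (E : V → V → Prop) : V → V → Prop := fun a b => a ≠ b ∧ ¬ ucl E a b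

/-- A digraph is oriented iff `E ∩ E⁻¹ = ∅`. -/
def Oriented {V : Type*} (E : V → V → Prop) : Prop := ∀ a b, E a b → ¬ E b a

/-- `O` is an orientation of `E`: a maximal oriented subset of `E`. -/
def IsOrientation {V : Type*} (O E : V → V → Prop) : Prop :=
  (∀ a b, O a b → E a b) ∧ Oriented O ∧
    ∀ O' : V → V → Prop, (∀ a b, O' a b → E a b) → Oriented O' →
      (∀ a b, O a b → O' a b) → ∀ a b, O' a b → O a b

/-- Transitivity of a digraph: `(a,b) ∈ E`, `(b,c) ∈ E` and `a ≠ c` imply `(a,c) ∈ E`. -/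
def TransD {V : Type*} (E : V → V → Prop) : Prop :=
  ∀ a b c, E a b → E b c → a ≠ c → E a c

/-- Transitive closure of a digraph. -/
def tcl {V : Type*} (E : V → V → Prop) : V → V → Prop := Relation.TransGen E

/-- A digraph is acyclic iff its transitive closure is irreflexive. -/
def Acyclic {V : Type*} (E : V → V → Prop) : Prop := Irreflexive (tcl E)

/-- A transitive orientation of `E` is an orientation of `E` that is transitive. -/
def IsTransOrientation {V : Type*} (O E : V → V → Prop) : Prop :=
  IsOrientation O E ∧ TransD O

/-- `E` is transitively orientable iff it has a transitive orientation. -/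
def TransOrientable {V : Type*} (E : V → V → Prop) : Prop := ∃ O, IsTransOrientation O E

/-- `L` is a strict linear order on the vertex set. -/
def IsStrictLinear {V : Type*} (L : V → V → Prop) : Prop :=
  Irreflexive L ∧ Transitive L ∧ ∀ a b : V, a ≠ b → L a b ∨ L b a

/-- `E` is 2-dimensional: the intersection of two strict linear orders. -/
def TwoDim {V : Type*} (E : V → V → Prop) : Prop :=
  ∃ L₁ L₂ : V → V → Prop, IsStrictLinear L₁ ∧ IsStrictLinear L₂ ∧
    ∀ a b, E a b ↔ L₁ a b ∧ L₂ a b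

/-- Direct forcing `Γ` between edges of an undirected graph `E`:
`(a,b) Γ (c,d)` iff both are edges of `E` and either `a = c` with `b, d` non-adjacent,
or `b = d` with `a, c` non-adjacent. -/
def Forces {V : Type*} (E : V → V → Prop) (e f : V × V) : Prop :=
  E e.1 e.2 ∧ E f.1 f.2 ∧
    ((e.1 = f.1 ∧ e.2 ≠ f.2 ∧ ¬ E e.2 f.2) ∨ (e.2 = f.2 ∧ e.1 ≠ f.1 ∧ ¬ E e.1 f.1))

/-- `S` is a 2-dimensional subgraph of `G`: a subgraph that is a 2-dimensional
acyclic transitive digraph. -/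
def TwoDimSubgraph {V : Type*} (G S : V → V → Prop) : Prop :=
  (∀ a b, S a b → G a b) ∧ Irreflexive S ∧ TransD S ∧ Acyclic S ∧ TwoDim S

/-- A permutation graph: an undirected graph such that both it and its complement
are transitively orientable. -/
def PermGraph {V : Type*} (E : V → V → Prop) : Prop :=
  Irreflexive E ∧ (∀ a b, E a b → E b a) ∧ TransOrientable E ∧ TransOrientable (cmpl E)

/-- `S` is a permutation subgraph of `G`: an undirected subgraph of `G` that is a
permutation graph. -/
def PermSubgraph {V : Type*} (G S : V → V → Prop) : Prop :=
  (∀ a b, S a b → G a b) ∧ PermGraph S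

lemma cmpl_symm {V : Type*} {G : V → V → Prop} {a b : V} (h : cmpl G a b) : cmpl G b a :=
  ⟨h.1.symm, fun hu => h.2 hu.symm⟩

/-- Any orientation of `cmpl G` contains one direction of each `cmpl G` edge. -/
lemma orient_total {V : Type*} {H G : V → V → Prop} (hH : IsOrientation H (cmpl G)) :
    ∀ a b, cmpl G a b → H a b ∨ H b a := by
  intro a b hab
  by_contra hc
  push_neg at hc
  obtain ⟨h1, h2⟩ := hc
  have hs : ∀ x y, (H x y ∨ (x = a ∧ y = b)) → cmpl G x y := by
    rintro x y (h | ⟨rfl, rfl⟩)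
    · exact hH.1 x y h
    · exact hab
  have ho : Oriented (fun x y => H x y ∨ (x = a ∧ y = b)) := by
    rintro x y (h | ⟨rfl, rfl⟩) h'
    · rcases h' with h' | ⟨rfl, rfl⟩
      · exact hH.2.1 x y h h'
      · exact h2 h
    · rcases h' with h' | ⟨he1, he2⟩
      · exact h2 h'
      · exact hab.1 he1.symm
  exact h1 (hH.2.2 _ hs ho (fun x y h => Or.inl h) a b (Or.inr ⟨rfl, rfl⟩))

/-- Key forcing lemma along a path of `G`. -/
lemma key_forcing {V : Type*} {G K : V → V → Prop} (hirr : Irreflexive G)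
    (hsub : ∀ a b, K a b → cmpl G a b) (htr : TransD K)
    (htot : ∀ a b, cmpl G a b → K a b ∨ K b a) :
    ∀ a c, tcl G a c → ∀ b, K a b → K b c →
      ¬ tcl G a b → ¬ tcl G b a → ¬ tcl G b c → ¬ tcl G c b → False := by
  intro a c hac
  induction hac with
  | single h =>
      intro b hab hbc _ _ _ _
      exact (hsub _ _ (htr _ b _ hab hbc (fun he => hirr _ (he ▸ h)))).2 (Or.inl h)
  | @tail c' c hac' hstep ih =>
      intro b hab hbc htab htba htbc htcb
      have htbc' : ¬ tcl G b c' := fun h => htbc (h.tail hstep)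
      have htc'b : ¬ tcl G c' b := fun h => htab (Relation.TransGen.trans hac' h)
      have hbc' : cmpl G b c' := by
        refine ⟨fun he => htbc (he ▸ Relation.TransGen.single hstep), fun hu => ?_⟩
        rcases hu with h | h
        · exact htbc' (Relation.TransGen.single h)
        · exact htc'b (Relation.TransGen.single h)
      rcases htot _ _ hbc' with h | h
      · exact ih b hab h htab htba htbc' htc'b
      · have hne : c' ≠ c := fun he => hirr _ (he ▸ hstep)
        exact (hsub _ _ (htr c' b c h hbc hne)).2 (Or.inl hstep)

theorem transitive_orientation_restricts
    {V : Type*} [Fintype V] (G H : V → V → Prop)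
    (hirr : Irreflexive G) (hacyc : Acyclic G)
    (hH : IsTransOrientation H (cmpl G)) :
    IsTransOrientation (fun a b => H a b ∧ cmpl (tcl G) a b) (cmpl (tcl G)) := by
  obtain ⟨⟨hsub, hor, hmax⟩, htr⟩ := hH
  have htot := orient_total (G := G) ⟨hsub, hor, hmax⟩
  have hcsub : ∀ a b, cmpl (tcl G) a b → cmpl G a b := by
    intro a b ⟨hne, hu⟩
    refine ⟨hne, fun h => hu ?_⟩
    rcases h with h | h
    · exact Or.inl (Relation.TransGen.single h)
    · exact Or.inr (Relation.TransGen.single h)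
  refine ⟨⟨fun a b h => h.2, fun a b h h' => hor a b h.1 h'.1, ?_⟩, ?_⟩
  · -- maximality
    intro O' hO'sub hO'or hext a b hab
    have hc := hO'sub a b hab
    rcases htot a b (hcsub a b hc) with h | h
    · exact ⟨h, hc⟩
    · exact absurd (hext b a ⟨h, cmpl_symm hc⟩) (hO'or a b hab)
  · -- transitivity
    intro a b c hab hbc hac
    obtain ⟨hab1, hne_ab, hu_ab⟩ := hab
    obtain ⟨hbc1, hne_bc, hu_bc⟩ := hbc
    have htab : ¬ tcl G a b := fun h => hu_ab (Or.inl h)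
    have htba : ¬ tcl G b a := fun h => hu_ab (Or.inr h)
    have htbc : ¬ tcl G b c := fun h => hu_bc (Or.inl h)
    have htcb : ¬ tcl G c b := fun h => hu_bc (Or.inr h)
    refine ⟨htr a b c hab1 hbc1 hac, hac, fun hu => ?_⟩
    rcases hu with h | h
    · exact key_forcing hirr hsub htr htot a c h b hab1 hbc1 htab htba htbc htcb
    · exact key_forcing hirr (fun x y hk => cmpl_symm (hsub y x hk))
        (fun x y z h1 h2 hne => htr z y x h2 h1 (Ne.symm hne))
        (fun x y hc => (htot x y hc).symm)
        c a h b hbc1 hab1 htcb htbc htba htab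
end

section
/- Let G be an acyclic transitive digraph on a finite vertex set V and let H be any orientation of the complement of G. Then G \ ucl(tcl(H)) is a 2-dimensional acyclic transitive digraph. -/
/-!
Write `K = tcl H`. Since `H` orients every edge of the complement of `G`, any two distinct
vertices are comparable in `G` or in `K`. Propagating `G`-comparabilities along `H`-paths shows
that `S = G \ ucl K` is transitive. Breaking the ties of the preorder `K` by an arbitrary linear
order gives a strict order `Q ⊆ K` comparing exactly the pairs that `S` does not; then linear
extensions of `S ∪ Q` and of `S ∪ Q⁻¹` intersect in `S`.
-/

section

variable {V : Type*}

lemma ucl_comm {E : V → V → Prop} {a b : V} : ucl E a b ↔ ucl E b a := Or.comm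

lemma ucl_flip (E : V → V → Prop) : ucl (flip E) = ucl E :=
  funext₂ fun _ _ => propext Or.comm

lemma cmpl_flip (E : V → V → Prop) : cmpl (flip E) = cmpl E := by
  unfold cmpl
  rw [ucl_flip]

lemma TransD.flip {E : V → V → Prop} (hE : TransD E) : TransD (flip E) :=
  fun a b c hab hbc hac => hE c b a hbc hab hac.symm

lemma Acyclic.asymm {E : V → V → Prop} (hE : Acyclic E) {a b : V} (hab : E a b) : ¬ E b a :=
  fun hba => hE a (.tail (.single hab) hba)

lemma IsStrictLinear.asymm {L : V → V → Prop} (hL : IsStrictLinear L) {a b : V} (hab : L a b) :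
    ¬ L b a :=
  fun hba => hL.1 a (hL.2.1 hab hba)

lemma exists_isStrictLinear_extension {R : V → V → Prop} (hirr : Irreflexive R)
    (htr : Transitive R) : ∃ L, IsStrictLinear L ∧ ∀ a b, R a b → L a b := by
  have : IsStrictOrder V R := { irrefl := hirr, trans := fun _ _ _ hab hbc => htr hab hbc }
  let := partialOrderOfSO R
  obtain ⟨s, hs, hRs⟩ := extend_partialOrder ((· ≤ ·) : V → V → Prop)
  refine ⟨fun a b => s a b ∧ a ≠ b, ⟨fun a h => h.2 rfl, ?_, fun a b hab => ?_⟩,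
    fun a b h => ⟨hRs _ _ (Or.inr h), fun hab => hirr a (hab ▸ h)⟩⟩
  · rintro a b c ⟨hab, hne⟩ ⟨hbc, -⟩
    exact ⟨_root_.trans hab hbc, fun hac => hne (antisymm hab (hac ▸ hbc))⟩
  · exact (total_of s a b).imp (⟨·, hab⟩) (⟨·, hab.symm⟩)

lemma transitive_sup_of_ucl_compl {S Q : V → V → Prop} (hS : Transitive S) (hQ : Transitive Q)
    (hdisj : ∀ a b, S a b → ¬ ucl Q a b) (htot : ∀ a b, a ≠ b → ucl S a b ∨ ucl Q a b) :
    Transitive (fun a b => S a b ∨ Q a b) := by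
  rintro a b c (hab | hab) (hbc | hbc)
  · exact .inl (hS hab hbc)
  · rcases eq_or_ne a c with rfl | hac
    · exact (hdisj a b hab (.inr hbc)).elim
    rcases htot a c hac with (hac | hca) | (hac | hca)
    · exact .inl hac
    · exact (hdisj c b (hS hca hab) (.inr hbc)).elim
    · exact .inr hac
    · exact (hdisj a b hab (.inr (hQ hbc hca))).elim
  · rcases eq_or_ne a c with rfl | hac
    · exact (hdisj b a hbc (.inr hab)).elim
    rcases htot a c hac with (hac | hca) | (hac | hca)
    · exact .inl hac
    · exact (hdisj b a (hS hbc hca) (.inr hab)).elim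
    · exact .inr hac
    · exact (hdisj b c hbc (.inr (hQ hca hab))).elim
  · exact .inr (hQ hab hbc)

/-- Dushnik–Miller: a strict order with transitively orientable incomparability graph is
2-dimensional. -/
theorem twoDim_of_ucl_compl {S Q : V → V → Prop} (hSirr : Irreflexive S) (hS : Transitive S)
    (hQirr : Irreflexive Q) (hQ : Transitive Q) (hdisj : ∀ a b, S a b → ¬ ucl Q a b)
    (htot : ∀ a b, a ≠ b → ucl S a b ∨ ucl Q a b) : TwoDim S := by
  have hdisj' : ∀ a b, S a b → ¬ ucl (flip Q) a b := by
    simpa only [ucl_flip] using hdisj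
  have htot' : ∀ a b, a ≠ b → ucl S a b ∨ ucl (flip Q) a b := by
    simpa only [ucl_flip] using htot
  have irrefl_sup {R : V → V → Prop} (hR : Irreflexive R) :
      Irreflexive (fun a b => S a b ∨ R a b) :=
    fun a h => h.elim (hSirr a) (hR a)
  obtain ⟨L₁, hL₁, hSQL₁⟩ := exists_isStrictLinear_extension (irrefl_sup hQirr)
    (transitive_sup_of_ucl_compl hS hQ hdisj htot)
  obtain ⟨L₂, hL₂, hSQL₂⟩ := exists_isStrictLinear_extension (irrefl_sup (R := flip Q) hQirr)
    (transitive_sup_of_ucl_compl hS (fun _ _ _ hab hbc => hQ hbc hab) hdisj' htot')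
  refine ⟨L₁, L₂, hL₁, hL₂, fun a b => ⟨fun h => ⟨hSQL₁ a b (.inl h), hSQL₂ a b (.inl h)⟩, ?_⟩⟩
  rintro ⟨h₁, h₂⟩
  have hab : a ≠ b := fun h => hL₁.1 a (h ▸ h₁)
  rcases htot a b hab with (hab | hba) | (hab | hba)
  · exact hab
  · exact (hL₁.asymm h₁ (hSQL₁ b a (.inl hba))).elim
  · exact (hL₂.asymm h₂ (hSQL₂ b a (.inr hab))).elim
  · exact (hL₁.asymm h₁ (hSQL₁ b a (.inr hba))).elim

lemma Transitive.exists_strictOrder_le {K : V → V → Prop} (hK : Transitive K) :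
    ∃ Q : V → V → Prop, Irreflexive Q ∧ Transitive Q ∧ (∀ a b, Q a b → K a b) ∧
      ∀ a b, a ≠ b → ucl K a b → ucl Q a b := by
  obtain ⟨L, hL, -⟩ := exists_isStrictLinear_extension (R := fun _ _ : V => False)
    (fun _ => id) (fun _ _ _ h _ => h)
  refine ⟨fun a b => K a b ∧ (¬ K b a ∨ L a b), ?_, ?_, fun a b h => h.1, ?_⟩
  · rintro a ⟨h, h' | h'⟩
    exacts [h' h, hL.1 a h']
  · rintro a b c ⟨hab, hba | hLab⟩ ⟨hbc, hcb | hLbc⟩ <;> refine ⟨hK hab hbc, ?_⟩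
    exacts [.inl fun hca => hba (hK hbc hca), .inl fun hca => hba (hK hbc hca),
      .inl fun hca => hcb (hK hca hab), .inr (hL.2.1 hLab hLbc)]
  · intro a b hab hKab
    by_cases hsymm : K a b ∧ K b a
    · exact (hL.2.2 a b hab).imp (⟨hsymm.1, .inr ·⟩) (⟨hsymm.2, .inr ·⟩)
    · exact hKab.imp (fun h => ⟨h, .inl fun h' => hsymm ⟨h, h'⟩⟩)
        (fun h => ⟨h, .inl fun h' => hsymm ⟨h', h⟩⟩)

lemma IsOrientation.total {O E : V → V → Prop} (hO : IsOrientation O E) {a b : V} (hab : a ≠ b)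
    (h : E a b) : O a b ∨ O b a := by
  by_contra! hnot
  refine hnot.1 (hO.2.2 (fun x y => O x y ∨ (x = a ∧ y = b)) ?_ ?_ (fun _ _ => .inl) a b
    (.inr ⟨rfl, rfl⟩))
  · rintro x y (hxy | ⟨rfl, rfl⟩)
    exacts [hO.1 x y hxy, h]
  · rintro x y (hxy | ⟨rfl, rfl⟩) (hyx | ⟨hya, hxb⟩)
    exacts [hO.2.1 x y hxy hyx, hnot.2 (hya ▸ hxb ▸ hxy), hnot.2 hyx, hab hya.symm]

lemma IsOrientation.ucl_or_ucl_tcl {G H : V → V → Prop} (hH : IsOrientation H (cmpl G))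
    {a b : V} (hab : a ≠ b) : ucl G a b ∨ ucl (tcl H) a b := by
  by_contra! h
  exact h.2 ((hH.total hab ⟨hab, h.1⟩).imp .single .single)

section Propagation

variable {G H : V → V → Prop} (htrans : TransD G) (hH : IsOrientation H (cmpl G))
include htrans hH

lemma IsOrientation.rel_or_eq_or_ucl_of_cmpl {x y b : V} (hxy : H x y) (hxb : G x b) :
    G y b ∨ y = b ∨ ucl H y b := by
  obtain ⟨hne, hxy⟩ := hH.1 x y hxy
  by_cases hyb : G y b
  · exact .inl hyb
  by_cases hby : G b y
  · exact (hxy (.inl (htrans x b y hxb hby hne))).elim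
  rcases eq_or_ne y b with rfl | hne'
  · exact .inr (.inl rfl)
  · exact .inr (.inr (hH.total hne' ⟨hne', not_or.2 ⟨hyb, hby⟩⟩))

lemma IsOrientation.rel_or_tcl_of_reflTransGen {x b c : V} (hxb : G x b) (hKxb : ¬ tcl H x b)
    (hxc : Relation.ReflTransGen H x c) : G c b ∨ tcl H b c := by
  induction hxc with
  | refl => exact .inl hxb
  | tail hxy hyz ih =>
    rcases ih with hyb | hby
    · rcases hH.rel_or_eq_or_ucl_of_cmpl htrans hyz hyb with hzb | rfl | hzb | hbz
      · exact .inl hzb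
      · exact (hKxb (.tail' hxy hyz)).elim
      · exact (hKxb ((Relation.TransGen.tail' hxy hyz).tail hzb)).elim
      · exact .inr (.single hbz)
    · exact .inr (hby.tail hyz)

end Propagation

lemma transitive_sdiff_ucl_tcl {G H : V → V → Prop} (hacyc : Acyclic G) (htrans : TransD G)
    (hH : IsOrientation H (cmpl G)) : Transitive (fun a b => G a b ∧ ¬ ucl (tcl H) a b) := by
  rintro a b c ⟨hab, hKab⟩ ⟨hbc, hKbc⟩
  have hac : a ≠ c := by
    rintro rfl
    exact hacyc.asymm hab hbc
  refine ⟨htrans a b c hab hbc hac, ?_⟩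
  rintro (hKac | hKca)
  · rcases hH.rel_or_tcl_of_reflTransGen htrans hab (hKab <| .inl ·) hKac.to_reflTransGen
      with hcb | hKbc'
    exacts [hacyc.asymm hbc hcb, hKbc (.inl hKbc')]
  · -- the mirror image of the first case, for the reversed order `flip G`
    have hH' : IsOrientation H (cmpl (flip G)) := (cmpl_flip G).symm ▸ hH
    rcases hH'.rel_or_tcl_of_reflTransGen htrans.flip (b := b) hbc (hKbc <| .inr ·)
      hKca.to_reflTransGen with hba | hKba
    exacts [hacyc.asymm hab hba, hKab (.inr hKba)]

end

theorem induced_subgraph_two_dimensional_general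
    {V : Type*} (G H : V → V → Prop)
    (hirr : Irreflexive G) (hacyc : Acyclic G) (htrans : TransD G)
    (hH : IsOrientation H (cmpl G)) :
    Irreflexive (fun a b => G a b ∧ ¬ ucl (tcl H) a b) ∧
    TransD (fun a b => G a b ∧ ¬ ucl (tcl H) a b) ∧
    Acyclic (fun a b => G a b ∧ ¬ ucl (tcl H) a b) ∧
    TwoDim (fun a b => G a b ∧ ¬ ucl (tcl H) a b) := by
  have hSirr : Irreflexive (fun a b => G a b ∧ ¬ ucl (tcl H) a b) := fun a h => hirr a h.1
  have hS := transitive_sdiff_ucl_tcl hacyc htrans hH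
  obtain ⟨Q, hQirr, hQ, hQK, hKQ⟩ :=
    Transitive.exists_strictOrder_le (K := tcl H) fun _ _ _ => Relation.TransGen.trans
  refine ⟨hSirr, fun a b c hab hbc _ => hS hab hbc,
    fun a h => hacyc a (Relation.TransGen.mono (fun _ _ => And.left) a a h),
    twoDim_of_ucl_compl hSirr hS hQirr hQ ?_ ?_⟩
  · rintro a b ⟨-, hK⟩ hQab
    exact hK (hQab.imp (hQK a b) (hQK b a))
  · intro a b hab
    by_cases hK : ucl (tcl H) a b
    · exact .inr (hKQ a b hab hK)
    · exact .inl ((hH.ucl_or_ucl_tcl hab).resolve_right hK |>.imp (⟨·, hK⟩)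
        (⟨·, fun h => hK (ucl_comm.1 h)⟩))

theorem induced_subgraph_two_dimensional
    {V : Type*} [Fintype V] (G H : V → V → Prop)
    (hirr : Irreflexive G) (hacyc : Acyclic G) (htrans : TransD G)
    (hH : IsOrientation H (cmpl G)) :
    Irreflexive (fun a b => G a b ∧ ¬ ucl (tcl H) a b) ∧
    TransD (fun a b => G a b ∧ ¬ ucl (tcl H) a b) ∧
    Acyclic (fun a b => G a b ∧ ¬ ucl (tcl H) a b) ∧
    TwoDim (fun a b => G a b ∧ ¬ ucl (tcl H) a b) :=
  induced_subgraph_two_dimensional_general G H hirr hacyc htrans hH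
end
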